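/- Let k be a positive integer, let c be a real constant with 0 < c < 1, and let f : ℕ → ℕ satisfy f(h) ≤ c·(h/(e·k))^{1/k} for all sufficiently large h. Then θ_k(f(h), h) → 0 as h → ∞. -/

import Mathlib

open MeasureTheory Filter

/-- A vertex of the complete `n`-ary tree of height `h`: at depth `i ≤ h`,
a vertex is a word of length `i` over an alphabet of size `n`. -/
abbrev TreeVertex (n h : ℕ) : Type := (i : Fin (h + 1)) × (Fin i.val → Fin n)

/-- The vertex at depth `i` on the root-to-leaf path determined by `leaf`:
the length-`i` prefix of `leaf`. -/
def pathVertex {n h : ℕ} (leaf : Fin h → Fin n) (i : Fin (h + 1)) : TreeVertex n h :=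
  ⟨i, fun j => leaf ⟨j.val, lt_of_lt_of_le j.isLt (Nat.lt_succ_iff.mp i.isLt)⟩⟩

/-- The event (set of labelings `ω` of the vertices) that some root-to-leaf path of
the complete `n`-ary tree of height `h` is `k`-accessible: there is a leaf and
indices `0 = r 0 < r 1 < ⋯ < r t = h` with consecutive gaps at most `k` along which
the labels are strictly increasing. -/
def kAccessibleEvent (k n h : ℕ) : Set (TreeVertex n h → ℝ) :=
  {ω | ∃ leaf : Fin h → Fin n, ∃ t : ℕ, ∃ r : Fin (t + 1) → Fin (h + 1),
    StrictMono r ∧ r 0 = 0 ∧ r (Fin.last t) = Fin.last h ∧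
    (∀ i : Fin t, (r i.succ).val ≤ (r i.castSucc).val + k) ∧
    StrictMono fun i => ω (pathVertex leaf (r i))}

/-- The vertices are labelled by i.i.d. Uniform[0,1] random variables: the product
over all vertices of Lebesgue measure restricted to `[0,1]`. -/
noncomputable def treeLabelMeasure (n h : ℕ) : Measure (TreeVertex n h → ℝ) :=
  Measure.pi fun _ => (volume : Measure ℝ).restrict (Set.Icc 0 1)

/-- `theta k n h` is the probability that the labelled complete `n`-ary tree of
height `h` contains a `k`-accessible root-to-leaf path. -/
noncomputable def theta (k n h : ℕ) : ℝ :=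
  (treeLabelMeasure n h (kAccessibleEvent k n h)).toReal

/-!
A `k`-accessible path is determined by a leaf (`n ^ h` choices) and a jump sequence
`0 = r₀ < ⋯ < r_t = h` with jumps in `[1, k]`; the `t + 1` i.i.d. labels along it are increasing
with probability at most `1 / (t + 1)!`. Jump sequences are counted with the generating function
`P(z) = z + ⋯ + z ^ k`: for every `z > 0`,
`θ_k(n, h) ≤ (n / z) ^ h * ∑ₜ P(z) ^ t / t! ≤ (n / z) ^ h * exp P(z)`.
For `z = (h / k) ^ (1 / k)` we have `P(z) ≤ h / k + h / z` and `n / z ≤ c * e ^ (-1 / k)`, so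
`θ_k(n, h) ≤ (c * e ^ (1 / z)) ^ h`, which decays geometrically since `z → ∞`.
-/

open Finset
open scoped ENNReal Nat

lemma Equiv.Perm.eq_one_of_strictMono {N : ℕ} {ρ : Equiv.Perm (Fin N)} (hρ : StrictMono ρ) :
    ρ = 1 := by
  have : hρ.orderIsoOfSurjective ρ ρ.surjective = OrderIso.refl _ := Subsingleton.elim _ _
  ext i
  exact congrArg Fin.val (DFunLike.congr_fun this i)

section OrderedLabels

variable {ι : Type*} {ν : Measure ℝ} [IsProbabilityMeasure ν]

lemma measurableSet_strictMono_comp {N : ℕ} (g : Fin N → ι) :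
    MeasurableSet {ω : ι → ℝ | StrictMono (ω ∘ g)} := by
  simp only [StrictMono, Function.comp_apply, Set.ofPred_forall]
  exact .iInter fun i => .iInter fun j => .iInter fun _ =>
    measurableSet_lt (measurable_pi_apply _) (measurable_pi_apply _)

lemma measureReal_pi_strictMono_comp_le [Fintype ι] {N : ℕ} {g : Fin N → ι}
    (hg : Function.Injective g) :
    (Measure.pi fun _ : ι => ν).real {ω | StrictMono (ω ∘ g)} ≤ 1 / N ! := by
  classical
  set μ := Measure.pi fun _ : ι => ν
  -- The `N !` events `T σ`, one per relative order of the labels `ω ∘ g`, are pairwise disjoint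
  -- and equiprobable, since relabelling the coordinates by a permutation of `ι` preserves `μ`.
  let T : Equiv.Perm (Fin N) → Set (ι → ℝ) := fun σ => {ω | StrictMono (ω ∘ g ∘ σ)}
  have hT : ∀ σ, MeasurableSet (T σ) := fun σ => measurableSet_strictMono_comp (g ∘ σ)
  have measure_eq : ∀ σ, μ (T σ) = μ (T 1) := by
    intro σ
    set π := σ.viaFintypeEmbedding ⟨g, hg⟩
    have hπ : ∀ i, π (g i) = g (σ i) := σ.viaFintypeEmbedding_apply_image ⟨g, hg⟩
    have hΦ := measurePreserving_piCongrLeft (fun _ : ι => ν) π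
    rw [← hΦ.measure_preimage_equiv]
    congr 1
    ext ω
    simp [T, Function.comp_def, ← hπ, MeasurableEquiv.piCongrLeft_apply_apply]
  have disjoint : Pairwise (Function.onFun Disjoint T) := by
    intro σ τ hne
    refine Set.disjoint_left.2 fun ω (hσ : StrictMono _) (hτ : StrictMono _) => hne ?_
    have : StrictMono (σ⁻¹ * τ) := fun a b hab => hσ.lt_iff_lt.mp (by simpa using hτ hab)
    exact inv_mul_eq_one.mp (Equiv.Perm.eq_one_of_strictMono this)
  suffices (N ! : ℝ≥0∞) * μ (T 1) ≤ 1 by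
    rw [measureReal_def, le_div_iff₀ (by positivity), mul_comm]
    simpa [T] using ENNReal.toReal_mono ENNReal.one_ne_top this
  calc
    (N ! : ℝ≥0∞) * μ (T 1) = ∑ σ, μ (T σ) := by simp [measure_eq, Fintype.card_perm]
    _ = μ (⋃ σ, T σ) := by rw [measure_iUnion disjoint hT, tsum_fintype]
    _ ≤ 1 := prob_le_one

end OrderedLabels

lemma Fin.sum_succ_sub_castSucc_add {t : ℕ} {f : Fin (t + 1) → ℕ} (hf : Monotone f) :
    ∑ i : Fin t, (f i.succ - f i.castSucc) + f 0 = f (Fin.last t) := by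
  induction t with
  | zero => simp
  | succ t ih =>
    have hlast := hf (Fin.castSucc_le_succ (Fin.last t))
    have := ih (hf.comp Fin.strictMono_castSucc.monotone)
    simp only [Function.comp_apply, Fin.castSucc_zero] at this
    rw [Fin.sum_univ_castSucc, add_right_comm, ← Fin.succ_last]
    simp only [Fin.succ_castSucc]
    omega

structure IsJumpSeq (k h t : ℕ) (r : Fin (t + 1) → Fin (h + 1)) : Prop where
  strictMono : StrictMono r
  map_zero : r 0 = 0
  map_last : r (Fin.last t) = Fin.last h
  succ_le : ∀ i : Fin t, (r i.succ : ℕ) ≤ r i.castSucc + k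

def jump {h t : ℕ} (r : Fin (t + 1) → Fin (h + 1)) (i : Fin t) : ℕ :=
  r i.succ - r i.castSucc

namespace IsJumpSeq

variable {k h t : ℕ} {r : Fin (t + 1) → Fin (h + 1)}

lemma jump_mem_Icc (hr : IsJumpSeq k h t r) (i : Fin t) : jump r i ∈ Icc 1 k := by
  have hlt := hr.strictMono (Fin.castSucc_lt_succ (i := i))
  have hle := hr.succ_le i
  rw [Fin.lt_def] at hlt
  simp only [jump, mem_Icc]
  omega

lemma sum_jump (hr : IsJumpSeq k h t r) : ∑ i, jump r i = h := by
  have := Fin.sum_succ_sub_castSucc_add (f := fun i => (r i : ℕ))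
    (Fin.val_strictMono.comp hr.strictMono).monotone
  simpa [jump, hr.map_zero, hr.map_last] using this

lemma eq_of_jump_eq {r' : Fin (t + 1) → Fin (h + 1)} (hr : IsJumpSeq k h t r)
    (hr' : IsJumpSeq k h t r') (hjump : jump r = jump r') : r = r' := by
  funext j
  induction j using Fin.induction with
  | zero => rw [hr.map_zero, hr'.map_zero]
  | succ i ih =>
    have h₁ := hr.strictMono (Fin.castSucc_lt_succ (i := i))
    have h₂ := hr'.strictMono (Fin.castSucc_lt_succ (i := i))
    have := congrFun hjump i
    rw [Fin.lt_def] at h₁ h₂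
    simp only [jump] at this
    ext
    omega

end IsJumpSeq

open Classical in
noncomputable def jumpSeqs (k h t : ℕ) : Finset (Fin (t + 1) → Fin (h + 1)) :=
  {r | IsJumpSeq k h t r}

lemma mem_jumpSeqs {k h t : ℕ} {r : Fin (t + 1) → Fin (h + 1)} :
    r ∈ jumpSeqs k h t ↔ IsJumpSeq k h t r := by
  simp [jumpSeqs]

lemma card_jumpSeqs_mul_pow_le (k h t : ℕ) {z : ℝ} (hz : 0 ≤ z) :
    #(jumpSeqs k h t) * z ^ h ≤ (∑ j ∈ Icc 1 k, z ^ j) ^ t := calc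
  #(jumpSeqs k h t) * z ^ h = ∑ r ∈ jumpSeqs k h t, ∏ i, z ^ jump r i := by
    rw [card_eq_sum_ones, Nat.cast_sum, sum_mul]
    refine sum_congr rfl fun r hr => ?_
    rw [prod_pow_eq_pow_sum, (mem_jumpSeqs.mp hr).sum_jump]
    simp
  _ = ∑ g ∈ ((jumpSeqs k h t).image jump : Finset (Fin t → ℕ)), ∏ i, z ^ g i := by
    rw [sum_image fun r hr r' hr' => (mem_jumpSeqs.mp hr).eq_of_jump_eq (mem_jumpSeqs.mp hr')]
  _ ≤ ∑ g ∈ Fintype.piFinset fun _ : Fin t => Icc (1 : ℕ) k, ∏ i, z ^ g i := by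
    refine sum_le_sum_of_subset_of_nonneg ?_ fun _ _ _ => by positivity
    simp only [subset_iff, mem_image, Fintype.mem_piFinset, forall_exists_index, and_imp]
    rintro _ r hr rfl i
    exact (mem_jumpSeqs.mp hr).jump_mem_Icc i
  _ = (∑ j ∈ Icc 1 k, z ^ j) ^ t := (sum_pow' _ _ _).symm

lemma sum_Icc_pow_le {z : ℝ} (hz : 1 ≤ z) (k : ℕ) :
    ∑ j ∈ Icc 1 k, z ^ j ≤ z ^ k * (1 + k / z) := by
  induction k with
  | zero => simp
  | succ k ih =>
    have hz0 : 0 < z := by linarith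
    have : z ^ k / z ≤ z ^ k := div_le_self (by positivity) hz
    rw [sum_Icc_succ_top (by omega)]
    calc ∑ j ∈ Icc 1 k, z ^ j + z ^ (k + 1) ≤ z ^ k * (1 + k / z) + z ^ (k + 1) := by gcongr
      _ ≤ z ^ (k + 1) * (1 + (k + 1 : ℕ) / z) := by
        rw [pow_succ, Nat.cast_succ]
        field_simp
        nlinarith

instance : IsProbabilityMeasure ((volume : Measure ℝ).restrict (Set.Icc (0 : ℝ) 1)) :=
  ⟨by simp⟩

instance (n h : ℕ) : IsProbabilityMeasure (treeLabelMeasure n h) := by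
  unfold treeLabelMeasure
  infer_instance

lemma pathVertex_injective {n h : ℕ} (leaf : Fin h → Fin n) :
    Function.Injective (pathVertex leaf) :=
  fun _ _ hij => congrArg Sigma.fst hij

lemma kAccessibleEvent_subset (k n h : ℕ) :
    kAccessibleEvent k n h ⊆ ⋃ leaf : Fin h → Fin n, ⋃ t ∈ range (h + 1),
      ⋃ r ∈ jumpSeqs k h t, {ω | StrictMono fun i => ω (pathVertex leaf (r i))} := by
  rintro ω ⟨leaf, t, r, hmono, h0, hlast, hstep, hω⟩
  have ht : t < h + 1 := by simpa using Fintype.card_le_of_injective r hmono.injective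
  simp only [Set.mem_iUnion, mem_range, mem_jumpSeqs]
  exact ⟨leaf, t, ht, r, ⟨hmono, h0, hlast, hstep⟩, hω⟩

lemma theta_le_sum_card_jumpSeqs (k n h : ℕ) :
    theta k n h ≤ n ^ h * ∑ t ∈ range (h + 1), #(jumpSeqs k h t) / ((t + 1)! : ℝ) := calc
  theta k n h ≤ ∑ leaf : Fin h → Fin n, ∑ t ∈ range (h + 1), ∑ r ∈ jumpSeqs k h t,
      (treeLabelMeasure n h).real {ω | StrictMono fun i => ω (pathVertex leaf (r i))} :=
    (measureReal_mono (kAccessibleEvent_subset k n h)).trans <|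
      (measureReal_iUnion_fintype_le _).trans <| sum_le_sum fun _ _ =>
        (measureReal_biUnion_finset_le _ _).trans <| sum_le_sum fun _ _ =>
          measureReal_biUnion_finset_le _ _
  _ ≤ ∑ leaf : Fin h → Fin n, ∑ t ∈ range (h + 1), ∑ r ∈ jumpSeqs k h t,
      1 / ((t + 1)! : ℝ) := by
    gcongr with leaf _ t _ r hr
    exact measureReal_pi_strictMono_comp_le
      ((pathVertex_injective leaf).comp (mem_jumpSeqs.mp hr).strictMono.injective)
  _ = n ^ h * ∑ t ∈ range (h + 1), #(jumpSeqs k h t) / ((t + 1)! : ℝ) := by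
    simp [div_eq_mul_inv]

lemma theta_le_div_pow_mul_exp (k n h : ℕ) {z : ℝ} (hz : 0 < z) :
    theta k n h ≤ (n / z) ^ h * Real.exp (∑ j ∈ Icc 1 k, z ^ j) := by
  set P := ∑ j ∈ Icc 1 k, z ^ j
  have hcard : ∀ t, (#(jumpSeqs k h t) : ℝ) ≤ P ^ t / z ^ h := fun t =>
    (le_div_iff₀ (by positivity)).mpr (card_jumpSeqs_mul_pow_le k h t hz.le)
  calc theta k n h ≤ n ^ h * ∑ t ∈ range (h + 1), #(jumpSeqs k h t) / ((t + 1)! : ℝ) :=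
        theta_le_sum_card_jumpSeqs k n h
    _ ≤ n ^ h * ∑ t ∈ range (h + 1), P ^ t / z ^ h / t ! := by
        gcongr with t
        · exact hcard t
        · omega
    _ = (n / z) ^ h * ∑ t ∈ range (h + 1), P ^ t / t ! := by
        rw [mul_sum, mul_sum]
        refine sum_congr rfl fun t _ => ?_
        ring
    _ ≤ (n / z) ^ h * Real.exp P := by
        gcongr
        exact Real.sum_le_exp_of_nonneg (by positivity) _

lemma theta_le_pow_of_div_le {k n h : ℕ} {c z : ℝ} (hk : k ≠ 0) (hz : 1 ≤ z)
    (hzk : z ^ k = h / k) (hn : n / z ≤ c * Real.exp (-(1 / k))) :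
    theta k n h ≤ (c * Real.exp z⁻¹) ^ h := by
  have hP : ∑ j ∈ Icc 1 k, z ^ j ≤ h / k + h * z⁻¹ := calc
    ∑ j ∈ Icc 1 k, z ^ j ≤ z ^ k * (1 + k / z) := sum_Icc_pow_le hz k
    _ = h / k + h * z⁻¹ := by
      rw [hzk]
      field_simp
  have hc : 0 ≤ c * Real.exp (-(1 / k)) := (by positivity : (0 : ℝ) ≤ n / z).trans hn
  calc theta k n h ≤ (n / z) ^ h * Real.exp (∑ j ∈ Icc 1 k, z ^ j) :=
        theta_le_div_pow_mul_exp k n h (by linarith)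
    _ ≤ (c * Real.exp (-(1 / k))) ^ h * Real.exp (h / k + h * z⁻¹) := by gcongr
    _ = (c * Real.exp z⁻¹) ^ h := by
      rw [mul_pow, mul_pow, ← Real.exp_nat_mul, ← Real.exp_nat_mul, mul_assoc, ← Real.exp_add]
      ring_nf

lemma rpow_one_div_div_exp_one_mul {x : ℝ} (hx : 0 ≤ x) (k : ℕ) :
    (x / (Real.exp 1 * k)) ^ ((1 : ℝ) / k) = Real.exp (-(1 / k)) * (x / k) ^ ((1 : ℝ) / k) := by
  rw [div_mul_eq_div_div_swap, div_eq_mul_inv _ (Real.exp 1), mul_comm,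
    Real.mul_rpow (by positivity) (by positivity), ← Real.exp_neg, ← Real.exp_mul]
  ring_nf

lemma theta_le_pow_of_le_mul_rpow {k n h : ℕ} {c : ℝ} (hk : k ≠ 0) (hkh : k ≤ h)
    (hn : n ≤ c * ((h : ℝ) / (Real.exp 1 * k)) ^ ((1 : ℝ) / k)) :
    theta k n h ≤ (c * Real.exp (((h : ℝ) / k) ^ ((1 : ℝ) / k))⁻¹) ^ h := by
  set z := ((h : ℝ) / k) ^ ((1 : ℝ) / k)
  have hz : 1 ≤ z :=
    Real.one_le_rpow ((one_le_div (by positivity)).mpr (by exact_mod_cast hkh)) (by positivity)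
  have hzk : z ^ k = h / k := by
    simp only [z, one_div]
    exact Real.rpow_inv_natCast_pow (by positivity) hk
  refine theta_le_pow_of_div_le hk hz hzk ?_
  rw [div_le_iff₀ (by linarith), mul_assoc, ← rpow_one_div_div_exp_one_mul (by positivity)]
  exact hn

theorem theta_tendsto_zero_of_const_mul_kth_root
    (k : ℕ) (hk : 0 < k) (c : ℝ) (hc0 : 0 < c) (hc1 : c < 1) (f : ℕ → ℕ)
    (hf : ∀ᶠ h : ℕ in atTop,
      (f h : ℝ) ≤ c * ((h : ℝ) / (Real.exp 1 * k)) ^ ((1 : ℝ) / k)) :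
    Tendsto (fun h : ℕ => theta k (f h) h) atTop (nhds 0) := by
  have hz : Tendsto (fun h : ℕ => ((h : ℝ) / k) ^ ((1 : ℝ) / k)) atTop atTop :=
    (tendsto_rpow_atTop (by positivity)).comp
      (tendsto_natCast_atTop_atTop.atTop_div_const (by positivity))
  have hbase : Tendsto (fun h : ℕ => c * Real.exp (((h : ℝ) / k) ^ ((1 : ℝ) / k))⁻¹) atTop
      (nhds c) := by
    simpa using ((Real.continuous_exp.tendsto 0).comp (tendsto_inv_atTop_zero.comp hz)).const_mul c
  obtain ⟨r, hcr, hr1⟩ := exists_between hc1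
  have hle : ∀ᶠ h in atTop, theta k (f h) h ≤ r ^ h := by
    filter_upwards [hf, eventually_ge_atTop k, hbase.eventually (gt_mem_nhds hcr)]
      with h hfh hkh hlt
    exact (theta_le_pow_of_le_mul_rpow hk.ne' hkh hfh).trans
      (pow_le_pow_left₀ (by positivity) hlt.le h)
  exact squeeze_zero' (Eventually.of_forall fun _ => ENNReal.toReal_nonneg) hle
    (tendsto_pow_atTop_nhds_zero_of_lt_one (hc0.trans hcr).le hr1)
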